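/- Every minimal subshift of a countable subshift is finite: if X is a countable subshift over a finite alphabet A and Y ⊆ X is a subshift such that the only nonempty closed shift-invariant subset of Y is Y itself, then Y is a finite set. -/

import Mathlib

namespace CountableSubshift

/-- A configuration over alphabet `A` on the plane `ℤ × ℤ`. -/
abbrev Config (A : Type*) := ℤ × ℤ → A

variable {A : Type*}

/-- The shift by a vector `v`. -/
def shift (v : ℤ × ℤ) (x : Config A) : Config A := fun u => x (u + v)

/-- The shift-orbit of a configuration. -/
def orbit (x : Config A) : Set (Config A) := Set.range fun v => shift v x

variable [TopologicalSpace A]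

/-- `Preceq x y` iff `x` belongs to the closure of the shift-orbit of `y`. -/
def Preceq (x y : Config A) : Prop := x ∈ closure (orbit y)

/-- Strict version of `Preceq`. -/
def Prec (x y : Config A) : Prop := Preceq x y ∧ ¬ Preceq y x

/-- `x ≈ y` : mutual `Preceq`. -/
def OrbEquiv (x y : Config A) : Prop := Preceq x y ∧ Preceq y x

/-- A subshift: nonempty, closed and shift-invariant set of configurations. -/
def IsSubshift (X : Set (Config A)) : Prop :=
  X.Nonempty ∧ IsClosed X ∧ ∀ v : ℤ × ℤ, shift v '' X = X

/-- A configuration is periodic if it has two linearly independent vectors of periodicity. -/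
def Periodic (x : Config A) : Prop :=
  ∃ v w : ℤ × ℤ, shift v x = x ∧ shift w x = x ∧ LinearIndependent ℤ ![v, w]

/-- `x` is at level 0 in `X`: it is `Preceq`-minimal in `X`. -/
def Level0 (X : Set (Config A)) (x : Config A) : Prop :=
  x ∈ X ∧ ∀ y ∈ X, Preceq y x → Preceq x y

/-- `x` is at level 1 in `X`. -/
def Level1 (X : Set (Config A)) (x : Config A) : Prop :=
  x ∈ X ∧ ¬ Level0 X x ∧ ∀ y ∈ X, Prec y x → Level0 X y

/-- `x` is at level 2 in `X`. -/
def Level2 (X : Set (Config A)) (x : Config A) : Prop :=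
  x ∈ X ∧ ¬ Level0 X x ∧ ¬ Level1 X x ∧ ∀ y ∈ X, Prec y x → Level0 X y ∨ Level1 X y

/-- The pattern `p` with (finite) domain `D` appears in `x` at position `u`. -/
def AppearsAt (D : Finset (ℤ × ℤ)) (p : ℤ × ℤ → A) (x : Config A) (u : ℤ × ℤ) : Prop :=
  ∀ d ∈ D, x (u + d) = p d

/-- A subshift of finite type: the nonempty set of configurations avoiding a
finite family of forbidden patterns. -/
def IsSFT (X : Set (Config A)) : Prop :=
  X.Nonempty ∧ ∃ (n : ℕ) (D : Fin n → Finset (ℤ × ℤ)) (p : Fin n → ℤ × ℤ → A),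
    X = {x : Config A | ∀ (i : Fin n) (u : ℤ × ℤ), ¬ AppearsAt (D i) (p i) x u}

/-- Every pattern appearing in `c` appears at infinitely many positions. -/
def AllPatternsInfinite (c : Config A) : Prop :=
  ∀ (D : Finset (ℤ × ℤ)) (u : ℤ × ℤ),
    {u' : ℤ × ℤ | ∀ d ∈ D, c (u' + d) = c (u + d)}.Infinite

/-- The standard dot product on `ℤ × ℤ`. -/
def dot (u w : ℤ × ℤ) : ℤ := u.1 * w.1 + u.2 * w.2

lemma shift_shift (v w : ℤ × ℤ) (x : Config A) : shift v (shift w x) = shift (w + v) x := by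
  funext u; simp only [shift]; congr 1; ring

lemma shift_zero (x : Config A) : shift 0 x = x := by
  funext u; simp [shift]

lemma shift_continuous [TopologicalSpace A] (v : ℤ × ℤ) :
    Continuous (shift v : Config A → Config A) :=
  continuous_pi fun u => continuous_apply (u + v)

/-- The shift as a homeomorphism of a shift-invariant subset. -/
def shiftHomeo [TopologicalSpace A] (Y : Set (Config A))
    (hmem : ∀ (v : ℤ × ℤ) (x : Config A), x ∈ Y → shift v x ∈ Y) (v : ℤ × ℤ) : ↥Y ≃ₜ ↥Y where
  toFun := fun y => ⟨shift v y, hmem v y y.2⟩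
  invFun := fun y => ⟨shift (-v) y, hmem (-v) y y.2⟩
  left_inv := fun y => by ext1; simp [shift_shift, shift_zero]
  right_inv := fun y => by ext1; simp [shift_shift, shift_zero]
  continuous_toFun := Continuous.subtype_mk ((shift_continuous v).comp continuous_subtype_val) _
  continuous_invFun := Continuous.subtype_mk ((shift_continuous (-v)).comp continuous_subtype_val) _

@[simp] lemma coe_shiftHomeo [TopologicalSpace A] (Y : Set (Config A))
    (hmem : ∀ (v : ℤ × ℤ) (x : Config A), x ∈ Y → shift v x ∈ Y) (v : ℤ × ℤ) (y : ↥Y) :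
    (shiftHomeo Y hmem v y : Config A) = shift v y := rfl

theorem stmt1 {A : Type*} [Fintype A] [Nonempty A] [TopologicalSpace A] [DiscreteTopology A]
    (X : Set (Config A)) (hX : IsSubshift X) (hcount : X.Countable)
    (Y : Set (Config A)) (hYX : Y ⊆ X) (hY : IsSubshift Y)
    (hmin : ∀ Z ⊆ Y, Z.Nonempty → IsClosed Z → (∀ v : ℤ × ℤ, shift v '' Z = Z) → Z = Y) :
    Y.Finite := by
  obtain ⟨hYne, hYcl, hYinv⟩ := hY
  have hmem : ∀ (v : ℤ × ℤ) (y : Config A), y ∈ Y → shift v y ∈ Y := by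
    intro v y hy
    rw [← hYinv v]; exact ⟨y, hy, rfl⟩
  have hYcpt : IsCompact Y := hYcl.isCompact
  haveI : CompactSpace ↥Y := isCompact_iff_compactSpace.mp hYcpt
  haveI : Countable ↥Y := (hcount.mono hYX).to_subtype
  haveI : Nonempty ↥Y := hYne.to_subtype
  haveI : T2Space ↥Y := inferInstance
  haveI : LocallyCompactSpace ↥Y := WeaklyLocallyCompactSpace.locallyCompactSpace
  set e : (ℤ × ℤ) → (↥Y ≃ₜ ↥Y) := shiftHomeo Y hmem with he
  -- isolated point via Baire
  obtain ⟨y0, hy0⟩ : ∃ y0 : ↥Y, IsOpen ({y0} : Set ↥Y) := by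
    obtain ⟨y, hy⟩ := nonempty_interior_of_iUnion_of_closed
      (f := fun y : ↥Y => ({y} : Set ↥Y)) (fun y => isClosed_singleton)
      (by ext z; simp)
    refine ⟨y, ?_⟩
    have h1 : interior ({y} : Set ↥Y) = {y} :=
      (Set.Nonempty.subset_singleton_iff hy).mp interior_subset
    rw [← h1]; exact isOpen_interior
  -- every shift of y0 is isolated
  have hiso : ∀ v : ℤ × ℤ, IsOpen ({e v y0} : Set ↥Y) := by
    intro v
    have := (e v).isOpenMap _ hy0
    simpa using this
  set S : Set ↥Y := Set.range (fun v => e v y0) with hS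
  have hSopen : IsOpen S := by
    rw [hS, ← Set.iUnion_singleton_eq_range]
    exact isOpen_iUnion fun v => hiso v
  have hy0S : y0 ∈ S := ⟨0, Subtype.ext (by simp [he, shift_zero])⟩
  have hSuniv : S = Set.univ := by
    by_contra hne
    set Z : Set (Config A) := Subtype.val '' Sᶜ with hZ
    have hZY : Z ⊆ Y := by rintro z ⟨w, _, rfl⟩; exact w.2
    have hZne : Z.Nonempty := by
      obtain ⟨w, hw⟩ := Set.nonempty_compl.mpr hne
      exact ⟨w.val, w, hw, rfl⟩
    have hZcl : IsClosed Z := hYcl.isClosedMap_subtype_val _ hSopen.isClosed_compl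
    have key : ∀ (v : ℤ × ℤ), shift v '' Z ⊆ Z := by
      intro v z hz
      obtain ⟨z', ⟨w, hwS, rfl⟩, rfl⟩ := hz
      refine ⟨e v w, ?_, rfl⟩
      rintro ⟨u, hu⟩
      have hu' : e u y0 = e v w := hu
      apply hwS
      refine ⟨u + -v, Subtype.ext ?_⟩
      have h2 : (w : Config A) = shift (-v) (shift v (w : Config A)) := by
        simp [shift_shift, shift_zero]
      calc (e (u + -v) y0 : Config A) = shift (u + -v) (y0 : Config A) := rfl
        _ = shift (-v) (shift u (y0 : Config A)) := by rw [shift_shift]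
        _ = shift (-v) ((e u y0 : Config A)) := rfl
        _ = shift (-v) ((e v w : Config A)) := by rw [hu']
        _ = shift (-v) (shift v (w : Config A)) := rfl
        _ = (w : Config A) := h2.symm
    have hZinv : ∀ v : ℤ × ℤ, shift v '' Z = Z := by
      intro v
      refine Set.Subset.antisymm (key v) ?_
      intro z hz
      have h3 : shift (-v) z ∈ Z := key (-v) ⟨z, hz, rfl⟩
      exact ⟨shift (-v) z, h3, by simp [shift_shift, shift_zero]⟩
    have hZeq := hmin Z hZY hZne hZcl hZinv
    have hy0Z : (y0 : Config A) ∈ Z := by rw [hZeq]; exact y0.2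
    obtain ⟨w, hw, hwe⟩ := hy0Z
    exact hw ((Subtype.ext hwe) ▸ hy0S)
  haveI : DiscreteTopology ↥Y := by
    rw [discreteTopology_iff_isOpen_singleton]
    intro y
    obtain ⟨v, hv⟩ : y ∈ S := hSuniv ▸ Set.mem_univ y
    rw [← hv]; exact hiso v
  have : Finite ↥Y := finite_of_compact_of_discrete
  exact Set.finite_coe_iff.mp this

end CountableSubshift
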